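/- arXiv:2311.15511 — 2 statements merged into one kernel-verified Lean document; each statement's English description precedes it below -/
import Mathlib

section
/- Let 0 < A < 1 and 0 < λ < 1, and define λ_0 = λ, λ_{i+1} = λ_i*(A + λ_i - A*λ_i). Then the series ∑_{i=0}^∞ λ_i converges. -/
/-- For `0 < A < 1`, `0 < λ < 1` and the sequence `λ₀ = λ`,
`λ_{i+1} = λ_i(A + λ_i - Aλ_i)`, the series `∑ λ_i` converges. -/
theorem lambda_seq_summable (A l : ℝ) (hA0 : 0 < A) (hA1 : A < 1)
    (hl0 : 0 < l) (hl1 : l < 1) (lam : ℕ → ℝ) (h0 : lam 0 = l)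
    (hrec : ∀ i, lam (i + 1) = lam i * (A + lam i - A * lam i)) :
    Summable lam := by
  set r : ℝ := A + l - A * l with hr
  have hr1 : r < 1 := by nlinarith
  have hr0 : 0 < r := by nlinarith
  have key : ∀ i, 0 < lam i ∧ lam i ≤ l * r ^ i := by
    intro i
    induction i with
    | zero => simp [h0, le_of_lt, hl0]
    | succ n ih =>
      obtain ⟨hpos, hle⟩ := ih
      have hlt1 : lam n < 1 := by
        have : l * r ^ n ≤ l * 1 := by
          apply mul_le_mul_of_nonneg_left _ hl0.le
          exact pow_le_one₀ hr0.le hr1.le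
        linarith
      have hfac : 0 < A + lam n - A * lam n := by nlinarith
      constructor
      · rw [hrec n]; positivity
      · rw [hrec n]
        have hln : lam n ≤ l := hle.trans (by nlinarith [pow_le_one₀ hr0.le hr1.le (n := n)])
        have h1 : A + lam n - A * lam n ≤ r := by nlinarith
        calc lam n * (A + lam n - A * lam n) ≤ (l * r ^ n) * r := by
              apply mul_le_mul hle h1 hfac.le
              positivity
          _ = l * r ^ (n + 1) := by ring
  apply Summable.of_nonneg_of_le (fun i => (key i).1.le) (fun i => (key i).2)
  exact (summable_geometric_of_lt_one hr0.le hr1).mul_left l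
end

section
/- For fixed α with 1/3 < α ≤ 0.4 and fixed β ≥ 1/6, the function γ ↦ (1 + γ/β) * (3α - 1 - γ)/(1 - α + γ), defined for γ ∈ [0, 3α - 1], attains its maximum over [0, 3α-1] at γ = 0 when β ≥ 1/6, where its value is (3α-1)/(1-α). -/
/-- For fixed `1/3 < α ≤ 0.4` and fixed `β ≥ 1/6`, the function
`γ ↦ (1 + γ/β)·(3α - 1 - γ)/(1 - α + γ)` on `[0, 3α-1]` attains its maximum at
`γ = 0`, where its value is `(3α-1)/(1-α)`. -/
theorem gamma_optimization (a b : ℝ) (ha1 : 1 / 3 < a) (ha2 : a ≤ 0.4)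
    (hb : 1 / 6 ≤ b) :
    (∀ g ∈ Set.Icc (0 : ℝ) (3 * a - 1),
      (1 + g / b) * ((3 * a - 1 - g) / (1 - a + g)) ≤
        (1 + 0 / b) * ((3 * a - 1 - 0) / (1 - a + 0))) ∧
    (1 + 0 / b) * ((3 * a - 1 - 0) / (1 - a + 0)) = (3 * a - 1) / (1 - a) := by
  have hb0 : (0:ℝ) < b := by linarith
  have ha : (0:ℝ) < 1 - a := by norm_num at ha2 ⊢; linarith
  constructor
  · rintro g ⟨hg0, hg1⟩
    have hd : (0:ℝ) < 1 - a + g := by linarith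
    simp only [zero_div, add_zero, sub_zero]
    rw [one_mul, mul_div_assoc', div_le_div_iff₀ hd ha, ← sub_nonneg]
    have key : (3 * a - 1) * (1 - a + g) - (1 + g / b) * (3 * a - 1 - g) * (1 - a)
        = (g * (b * (3 * a - 1) * (1 - a + g) - (b + g) * (3 * a - 1 - g) * (1 - a))) / (g * b) ∨ g = 0 := by
      rcases eq_or_lt_of_le hg0 with h | h
      · right; exact h.symm
      · left; field_simp
    rcases key with key | key
    · rw [key]
      apply div_nonneg _ (by positivity)
      rcases eq_or_lt_of_le hg0 with h | h
      · simp [← h]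
      · apply mul_nonneg h.le
        nlinarith [mul_nonneg h.le (sub_nonneg.2 hg1), sq_nonneg g, sq_nonneg (3*a-1-g),
          mul_nonneg (mul_nonneg h.le h.le) (sub_nonneg.2 hg1),
          mul_nonneg (sub_nonneg.2 hb) (mul_nonneg h.le (sub_nonneg.2 hg1)),
          mul_nonneg (sub_nonneg.2 hb) (sq_nonneg g)]
    · subst key; simp
  · simp
end
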